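/- Let 0 < β₀ ≤ β₁ with β₀ ≤ a(x) ≤ β₁ and β₀ ≤ ã(x) ≤ β₁ for all x ∈ Ω, let c₀ > 0, 0 < h ≤ 1, M ≥ 0, K ≥ 0 and 1 ≤ p ≤ 2, with μ(ω) ≤ c₀ h² and ‖∇u(x)‖ ≤ M for almost every x ∈ ω. Let u, ũ : ℝ² → ℝ be differentiable functions such that B(u,u) = B̃(ũ,u) and B(u,ũ) = B̃(ũ,ũ). If |∫_Ω a ‖∇u‖² dx − ∫_Ω ã ‖∇ũ‖² dx| ≤ K h^p, then |∫_Ω a ‖∇u‖² dx − ∫_Ω ã ‖∇ũ‖² dx| ≤ √(c₀ |a₀ − a₁|) · M · √(K + (β₁/β₀) · (K + |a₀ − a₁| c₀ M²)) · h^{1 + p/2}. -/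

import Mathlib

open MeasureTheory
open scoped RealInnerProductSpace

/-!
Write `D` for the energy gap `∫_Ω a ‖∇u‖² - ∫_Ω ã ‖∇ũ‖²`, `d = a₀ - a₁`, and `I₁`, `I₂` for
`∫_ω ‖∇u‖²`, `∫_ω ‖∇ũ‖²`. Since `ã - a` is the constant `d` on `ω` and vanishes elsewhere, the two
Galerkin relations give `D = d ∫_ω ⟪∇u, ∇ũ⟫`, and the two energy norms of the error are
`∫_Ω a ‖∇u - ∇ũ‖² = D - d I₂ ≥ 0` and `∫_Ω ã ‖∇u - ∇ũ‖² = d I₁ - D`. Comparing them through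
`a ≤ (β₁ / β₀) ã` bounds `|d| I₂` by `K hᵖ + (β₁ / β₀) (K hᵖ + |d| I₁)` whatever the sign of `d`.
Cauchy–Schwarz on `ω` then gives `D² ≤ (|d| I₁) (|d| I₂)`, and `I₁ ≤ M² c₀ h²`, `h² ≤ hᵖ` finish.
-/

theorem abs_mul_le_add_mul_add_abs_mul {D d I₁ I₂ κ ε : ℝ}
    (h_nonneg : 0 ≤ D - d * I₂) (h_le : D - d * I₂ ≤ κ * (d * I₁ - D)) (hD : |D| ≤ ε)
    (hκ : 0 ≤ κ) (hI₁ : 0 ≤ I₁) :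
    |d| * I₂ ≤ ε + κ * (ε + |d| * I₁) := by
  have hε : 0 ≤ ε := (abs_nonneg D).trans hD
  obtain ⟨hDl, hDu⟩ := abs_le.1 hD
  rcases le_or_gt 0 d with hd | hd
  · rw [abs_of_nonneg hd]
    nlinarith [mul_nonneg hκ (add_nonneg hε (mul_nonneg hd hI₁))]
  · rw [abs_of_neg hd]
    nlinarith [mul_le_mul_of_nonneg_left (show d * I₁ - D ≤ ε + -d * I₁ by nlinarith) hκ]

theorem sq_rpow_one_add_half {h : ℝ} (hh : 0 < h) (p : ℝ) :
    (h ^ (1 + p / 2)) ^ 2 = h ^ 2 * h ^ p := by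
  rw [← Real.rpow_natCast, ← Real.rpow_mul hh.le, ← Real.rpow_natCast, ← Real.rpow_add hh]
  norm_num [add_mul, div_mul_cancel₀]

theorem abs_mul_le_of_sq_le_mul {d P I₁ I₂ c₀ h M K κ p : ℝ} (hP : P ^ 2 ≤ I₁ * I₂)
    (hI₂_nonneg : 0 ≤ I₂) (hI₁ : I₁ ≤ M ^ 2 * (c₀ * h ^ 2))
    (hI₂ : |d| * I₂ ≤ K * h ^ p + κ * (K * h ^ p + |d| * I₁))
    (hc₀ : 0 < c₀) (hh0 : 0 < h) (hh1 : h ≤ 1) (hM : 0 ≤ M) (hp2 : p ≤ 2) (hK : 0 ≤ K)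
    (hκ : 0 ≤ κ) :
    |d * P| ≤ √(c₀ * |d|) * M * √(K + κ * (K + |d| * c₀ * M ^ 2)) * h ^ (1 + p / 2) := by
  have hS : 0 ≤ K + κ * (K + |d| * c₀ * M ^ 2) := by positivity
  have hI₂' : |d| * I₂ ≤ (K + κ * (K + |d| * c₀ * M ^ 2)) * h ^ p := by
    have hhp : h ^ 2 ≤ h ^ p := by
      exact_mod_cast Real.rpow_le_rpow_of_exponent_ge hh0 hh1 hp2
    calc _ ≤ K * h ^ p + κ * (K * h ^ p + |d| * (M ^ 2 * (c₀ * h ^ p))) := by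
          grw [hI₂, hI₁, hhp]
      _ = _ := by ring
  refine abs_le_of_sq_le_sq ?_ (by positivity)
  calc (d * P) ^ 2 = d ^ 2 * P ^ 2 := by ring
    _ ≤ d ^ 2 * (I₁ * I₂) := by gcongr
    _ = (|d| * I₁) * (|d| * I₂) := by rw [← sq_abs d]; ring
    _ ≤ (|d| * (M ^ 2 * (c₀ * h ^ 2))) * ((K + κ * (K + |d| * c₀ * M ^ 2)) * h ^ p) := by
        gcongr
    _ = _ := by
        rw [mul_pow, mul_pow, mul_pow, Real.sq_sqrt (by positivity), Real.sq_sqrt hS,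
          sq_rpow_one_add_half hh0]
        ring

theorem measurable_gradient {F : Type*} [NormedAddCommGroup F] [InnerProductSpace ℝ F]
    [CompleteSpace F] [MeasurableSpace F] [BorelSpace F] (f : F → ℝ) :
    Measurable (gradient f) :=
  (InnerProductSpace.toDual ℝ F).symm.continuous.measurable.comp (measurable_fderiv ℝ f)

theorem setIntegral_norm_sq_le {X F : Type*} [MeasurableSpace X] {μ : Measure X}
    [NormedAddCommGroup F] {s : Set X} {v : X → F} {M : ℝ} (hs : μ s < ⊤)
    (hM : ∀ᵐ x ∂μ.restrict s, ‖v x‖ ≤ M) :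
    ∫ x in s, ‖v x‖ ^ 2 ∂μ ≤ M ^ 2 * μ.real s := by
  refine (Real.le_norm_self _).trans (norm_setIntegral_le_of_norm_le_const_ae hs ?_)
  filter_upwards [hM] with x hx
  rw [norm_pow, norm_norm]
  gcongr

theorem mul_norm_sub_sq_eq {X E : Type*} [NormedAddCommGroup E] [InnerProductSpace ℝ E]
    (c : X → ℝ) (v w : X → E) :
    (fun x => c x * ‖v x - w x‖ ^ 2)
      = fun x => c x * ‖v x‖ ^ 2 - 2 * (c x * ⟪v x, w x⟫) + c x * ‖w x‖ ^ 2 := by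
  funext x
  rw [norm_sub_sq_real]
  ring

section

variable {X E : Type*} [MeasurableSpace X] {μ : Measure X}
  [NormedAddCommGroup E] [InnerProductSpace ℝ E]

theorem sq_integral_inner_le {v w : X → E} (hv : MemLp v 2 μ) (hw : MemLp w 2 μ) :
    (∫ x, ⟪v x, w x⟫ ∂μ) ^ 2 ≤ (∫ x, ‖v x‖ ^ 2 ∂μ) * ∫ x, ‖w x‖ ^ 2 ∂μ := by
  have key := real_inner_mul_inner_self_le (hv.toLp v) (hw.toLp w)
  simp only [L2.inner_def, real_inner_self_eq_norm_sq] at key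
  rw [sq]
  convert key using 2 <;> refine integral_congr_ae ?_ <;>
    filter_upwards [hv.coeFn_toLp, hw.coeFn_toLp] with x hvx hwx <;> simp only [hvx, hwx]

theorem integral_mul_norm_sub_sq {c : X → ℝ} {v w : X → E}
    (hv : Integrable (fun x => c x * ‖v x‖ ^ 2) μ)
    (hvw : Integrable (fun x => c x * ⟪v x, w x⟫) μ)
    (hw : Integrable (fun x => c x * ‖w x‖ ^ 2) μ) :
    ∫ x, c x * ‖v x - w x‖ ^ 2 ∂μ
      = (∫ x, c x * ‖v x‖ ^ 2 ∂μ) - 2 * (∫ x, c x * ⟪v x, w x⟫ ∂μ) + ∫ x, c x * ‖w x‖ ^ 2 ∂μ := by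
  rw [mul_norm_sub_sq_eq, integral_add _ hw, integral_sub hv (hvw.const_mul 2),
    integral_const_mul]
  exact hv.sub (hvw.const_mul 2)

theorem Integrable.mul_norm_sub_sq {c : X → ℝ} {v w : X → E}
    (hv : Integrable (fun x => c x * ‖v x‖ ^ 2) μ)
    (hvw : Integrable (fun x => c x * ⟪v x, w x⟫) μ)
    (hw : Integrable (fun x => c x * ‖w x‖ ^ 2) μ) :
    Integrable (fun x => c x * ‖v x - w x‖ ^ 2) μ := by
  rw [mul_norm_sub_sq_eq]
  exact (hv.sub (hvw.const_mul 2)).add hw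

theorem setIntegral_mul_eq_add_const_mul {Ω ω : Set X} {a b f : X → ℝ} {c : ℝ}
    (hΩ : MeasurableSet Ω) (hω : MeasurableSet ω) (hωΩ : ω ⊆ Ω)
    (h_eq : ∀ x ∈ Ω \ ω, a x = b x) (h_diff : ∀ x ∈ ω, b x - a x = c)
    (ha : IntegrableOn (fun x => a x * f x) Ω μ) (hb : IntegrableOn (fun x => b x * f x) Ω μ) :
    ∫ x in Ω, b x * f x ∂μ = (∫ x in Ω, a x * f x ∂μ) + c * ∫ x in ω, f x ∂μ := by
  rw [← sub_eq_iff_eq_add', ← integral_sub hb ha, ← integral_const_mul,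
    setIntegral_eq_of_subset_of_forall_sdiff_eq_zero hΩ hωΩ fun x hx => by
      rw [h_eq x hx, sub_self]]
  refine setIntegral_congr_fun hω fun x hx => ?_
  rw [← sub_mul, h_diff x hx]

theorem setIntegral_mul_norm_sq_sub_eq {Ω ω : Set X} {a b : X → ℝ} {c : ℝ} {v w : X → E}
    (hΩ : MeasurableSet Ω) (hω : MeasurableSet ω) (hωΩ : ω ⊆ Ω)
    (h_eq : ∀ x ∈ Ω \ ω, a x = b x) (h_diff : ∀ x ∈ ω, b x - a x = c)
    (hbwv : IntegrableOn (fun x => b x * ⟪w x, v x⟫) Ω μ)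
    (havw : IntegrableOn (fun x => a x * ⟪v x, w x⟫) Ω μ)
    (h₁ : ∫ x in Ω, a x * ‖v x‖ ^ 2 ∂μ = ∫ x in Ω, b x * ⟪w x, v x⟫ ∂μ)
    (h₂ : ∫ x in Ω, a x * ⟪v x, w x⟫ ∂μ = ∫ x in Ω, b x * ‖w x‖ ^ 2 ∂μ) :
    (∫ x in Ω, a x * ‖v x‖ ^ 2 ∂μ) - ∫ x in Ω, b x * ‖w x‖ ^ 2 ∂μ
      = c * ∫ x in ω, ⟪v x, w x⟫ ∂μ := by
  simp only [real_inner_comm (v _)] at hbwv h₁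
  rw [h₁, ← h₂, setIntegral_mul_eq_add_const_mul hΩ hω hωΩ h_eq h_diff havw hbwv]
  ring

theorem abs_mul_setIntegral_norm_sq_le {Ω ω : Set X} {a b : X → ℝ} {c β₀ β₁ ε : ℝ}
    {v w : X → E} (hΩ : MeasurableSet Ω) (hω : MeasurableSet ω) (hωΩ : ω ⊆ Ω)
    (h_eq : ∀ x ∈ Ω \ ω, a x = b x) (h_diff : ∀ x ∈ ω, b x - a x = c)
    (ha : Measurable a) (hb : Measurable b) (hβ₀ : 0 < β₀) (hβ : β₀ ≤ β₁)
    (ha_bdd : ∀ x ∈ Ω, β₀ ≤ a x ∧ a x ≤ β₁) (hb_bdd : ∀ x ∈ Ω, β₀ ≤ b x ∧ b x ≤ β₁)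
    (hav : IntegrableOn (fun x => a x * ‖v x‖ ^ 2) Ω μ)
    (hbw : IntegrableOn (fun x => b x * ‖w x‖ ^ 2) Ω μ)
    (hbwv : IntegrableOn (fun x => b x * ⟪w x, v x⟫) Ω μ)
    (havw : IntegrableOn (fun x => a x * ⟪v x, w x⟫) Ω μ)
    (hv : IntegrableOn (fun x => ‖v x‖ ^ 2) Ω μ) (hw : IntegrableOn (fun x => ‖w x‖ ^ 2) Ω μ)
    (h₁ : ∫ x in Ω, a x * ‖v x‖ ^ 2 ∂μ = ∫ x in Ω, b x * ⟪w x, v x⟫ ∂μ)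
    (h₂ : ∫ x in Ω, a x * ⟪v x, w x⟫ ∂μ = ∫ x in Ω, b x * ‖w x‖ ^ 2 ∂μ)
    (hε : |(∫ x in Ω, a x * ‖v x‖ ^ 2 ∂μ) - ∫ x in Ω, b x * ‖w x‖ ^ 2 ∂μ| ≤ ε) :
    |c| * ∫ x in ω, ‖w x‖ ^ 2 ∂μ ≤ ε + β₁ / β₀ * (ε + |c| * ∫ x in ω, ‖v x‖ ^ 2 ∂μ) := by
  have h_norm_le {f : X → ℝ} (hf : ∀ x ∈ Ω, β₀ ≤ f x ∧ f x ≤ β₁) :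
      ∀ᵐ x ∂μ.restrict Ω, ‖f x‖ ≤ β₁ :=
    ae_restrict_of_forall_mem hΩ fun x hx => by
      rw [Real.norm_eq_abs, abs_le]
      constructor <;> linarith [hf x hx]
  have haw : IntegrableOn (fun x => a x * ‖w x‖ ^ 2) Ω μ :=
    hw.bdd_mul ha.aestronglyMeasurable (h_norm_le ha_bdd)
  have hbv : IntegrableOn (fun x => b x * ‖v x‖ ^ 2) Ω μ :=
    hv.bdd_mul hb.aestronglyMeasurable (h_norm_le hb_bdd)
  simp only [real_inner_comm (v _)] at hbwv h₁
  have hF := integral_mul_norm_sub_sq hav havw haw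
  have hG := integral_mul_norm_sub_sq hbv hbwv hbw
  have hw_pert := setIntegral_mul_eq_add_const_mul hΩ hω hωΩ h_eq h_diff haw hbw
  have hv_pert := setIntegral_mul_eq_add_const_mul hΩ hω hωΩ h_eq h_diff hav hbv
  have hκ : 0 ≤ β₁ / β₀ := div_nonneg (hβ₀.le.trans hβ) hβ₀.le
  have hF_nonneg : 0 ≤ ∫ x in Ω, a x * ‖v x - w x‖ ^ 2 ∂μ :=
    setIntegral_nonneg hΩ fun x hx => mul_nonneg (hβ₀.le.trans (ha_bdd x hx).1) (sq_nonneg _)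
  have hFG : ∫ x in Ω, a x * ‖v x - w x‖ ^ 2 ∂μ
      ≤ β₁ / β₀ * ∫ x in Ω, b x * ‖v x - w x‖ ^ 2 ∂μ := by
    rw [← integral_const_mul]
    refine setIntegral_mono_on (Integrable.mul_norm_sub_sq hav havw haw)
      ((Integrable.mul_norm_sub_sq hbv hbwv hbw).const_mul _) hΩ fun x hx => ?_
    have hab : a x ≤ β₁ / β₀ * b x := by
      calc a x ≤ β₁ / β₀ * β₀ := by rw [div_mul_cancel₀ _ hβ₀.ne']; exact (ha_bdd x hx).2
        _ ≤ β₁ / β₀ * b x := mul_le_mul_of_nonneg_left (hb_bdd x hx).1 hκ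
    rw [← mul_assoc]
    exact mul_le_mul_of_nonneg_right hab (sq_nonneg _)
  have hF_eq : ∫ x in Ω, a x * ‖v x - w x‖ ^ 2 ∂μ
      = ((∫ x in Ω, a x * ‖v x‖ ^ 2 ∂μ) - ∫ x in Ω, b x * ‖w x‖ ^ 2 ∂μ)
        - c * ∫ x in ω, ‖w x‖ ^ 2 ∂μ := by
    linear_combination hF - 2 * h₂ - hw_pert
  have hG_eq : ∫ x in Ω, b x * ‖v x - w x‖ ^ 2 ∂μ
      = c * (∫ x in ω, ‖v x‖ ^ 2 ∂μ)
        - ((∫ x in Ω, a x * ‖v x‖ ^ 2 ∂μ) - ∫ x in Ω, b x * ‖w x‖ ^ 2 ∂μ) := by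
    linear_combination hG + hv_pert + 2 * h₁
  rw [hF_eq, hG_eq] at hFG
  rw [hF_eq] at hF_nonneg
  exact abs_mul_le_add_mul_add_abs_mul hF_nonneg hFG hε hκ
    (setIntegral_nonneg hω fun x _ => sq_nonneg _)

end

theorem stmt_7_general
    (Ω ω : Set (EuclideanSpace ℝ (Fin 2)))
    (hΩmeas : MeasurableSet Ω) (hΩfin : volume Ω < ⊤)
    (hωmeas : MeasurableSet ω) (hωsub : ω ⊆ Ω)
    (a₀ a₁ : ℝ) (a atil : EuclideanSpace ℝ (Fin 2) → ℝ)
    (hameas : Measurable a) (hatilmeas : Measurable atil)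
    (ha_eq : ∀ x ∈ Ω \ ω, a x = atil x)
    (ha_diff : ∀ x ∈ ω, atil x - a x = a₀ - a₁)
    (β₀ β₁ : ℝ) (hβ₀ : 0 < β₀) (hβ : β₀ ≤ β₁)
    (ha_bdd : ∀ x ∈ Ω, β₀ ≤ a x ∧ a x ≤ β₁)
    (hatil_bdd : ∀ x ∈ Ω, β₀ ≤ atil x ∧ atil x ≤ β₁)
    (u util : EuclideanSpace ℝ (Fin 2) → ℝ)
    (c₀ h M K p : ℝ) (hc₀ : 0 < c₀) (hh0 : 0 < h) (hh1 : h ≤ 1)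
    (hM0 : 0 ≤ M) (hK : 0 ≤ K) (hp2 : p ≤ 2)
    (hωvol : (volume ω).toReal ≤ c₀ * h ^ 2)
    (hM : ∀ᵐ x ∂volume.restrict ω, ‖gradient u x‖ ≤ M)
    (hint1 : IntegrableOn (fun x => a x * ‖gradient u x‖ ^ 2) Ω)
    (hint2 : IntegrableOn (fun x => atil x * ‖gradient util x‖ ^ 2) Ω)
    (hint3 : IntegrableOn (fun x => atil x * ⟪gradient util x, gradient u x⟫) Ω)
    (hint4 : IntegrableOn (fun x => a x * ⟪gradient u x, gradient util x⟫) Ω)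
    (hint5 : IntegrableOn (fun x => ‖gradient u x‖ ^ 2) Ω)
    (hint6 : IntegrableOn (fun x => ‖gradient util x‖ ^ 2) Ω)
    (hB1 : (∫ x in Ω, a x * ‖gradient u x‖ ^ 2)
        = ∫ x in Ω, atil x * ⟪gradient util x, gradient u x⟫)
    (hB2 : (∫ x in Ω, a x * ⟪gradient u x, gradient util x⟫)
        = ∫ x in Ω, atil x * ‖gradient util x‖ ^ 2)
    (hKp : |(∫ x in Ω, a x * ‖gradient u x‖ ^ 2) - ∫ x in Ω, atil x * ‖gradient util x‖ ^ 2|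
        ≤ K * h ^ p) :
    |(∫ x in Ω, a x * ‖gradient u x‖ ^ 2) - ∫ x in Ω, atil x * ‖gradient util x‖ ^ 2|
      ≤ Real.sqrt (c₀ * |a₀ - a₁|) * M
          * Real.sqrt (K + (β₁ / β₀) * (K + |a₀ - a₁| * c₀ * M ^ 2))
          * h ^ (1 + p / 2) := by
  have hmemLp (f : EuclideanSpace ℝ (Fin 2) → ℝ)
      (hf : IntegrableOn (fun x => ‖gradient f x‖ ^ 2) Ω) :
      MemLp (gradient f) 2 (volume.restrict ω) :=
    (memLp_two_iff_integrable_sq_norm (measurable_gradient f).aestronglyMeasurable).2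
      (hf.mono_set hωsub).integrable
  have hI₁ : ∫ x in ω, ‖gradient u x‖ ^ 2 ≤ M ^ 2 * (c₀ * h ^ 2) :=
    (setIntegral_norm_sq_le ((measure_mono hωsub).trans_lt hΩfin) hM).trans
      (mul_le_mul_of_nonneg_left hωvol (sq_nonneg M))
  rw [setIntegral_mul_norm_sq_sub_eq hΩmeas hωmeas hωsub ha_eq ha_diff hint3 hint4 hB1 hB2]
  exact abs_mul_le_of_sq_le_mul (sq_integral_inner_le (hmemLp u hint5) (hmemLp util hint6))
    (setIntegral_nonneg hωmeas fun x _ => sq_nonneg _) hI₁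
    (abs_mul_setIntegral_norm_sq_le hΩmeas hωmeas hωsub ha_eq ha_diff hameas hatilmeas hβ₀ hβ
      ha_bdd hatil_bdd hint1 hint2 hint3 hint4 hint5 hint6 hB1 hB2 hKp)
    hc₀ hh0 hh1 hM0 hp2 hK (div_nonneg (hβ₀.le.trans hβ) hβ₀.le)

theorem stmt_7
    (Ω ω : Set (EuclideanSpace ℝ (Fin 2)))
    (hΩmeas : MeasurableSet Ω) (hΩfin : volume Ω < ⊤)
    (hωmeas : MeasurableSet ω) (hωsub : ω ⊆ Ω)
    (a₀ a₁ : ℝ) (a atil : EuclideanSpace ℝ (Fin 2) → ℝ)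
    (hameas : Measurable a) (hatilmeas : Measurable atil)
    (ha_eq : ∀ x ∈ Ω \ ω, a x = atil x)
    (ha_diff : ∀ x ∈ ω, atil x - a x = a₀ - a₁)
    (β₀ β₁ : ℝ) (hβ₀ : 0 < β₀) (hβ : β₀ ≤ β₁)
    (ha_bdd : ∀ x ∈ Ω, β₀ ≤ a x ∧ a x ≤ β₁)
    (hatil_bdd : ∀ x ∈ Ω, β₀ ≤ atil x ∧ atil x ≤ β₁)
    (u util : EuclideanSpace ℝ (Fin 2) → ℝ)
    (hu : Differentiable ℝ u) (hutil : Differentiable ℝ util)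
    (c₀ h M K p : ℝ) (hc₀ : 0 < c₀) (hh0 : 0 < h) (hh1 : h ≤ 1)
    (hM0 : 0 ≤ M) (hK : 0 ≤ K) (hp1 : 1 ≤ p) (hp2 : p ≤ 2)
    (hωvol : (volume ω).toReal ≤ c₀ * h ^ 2)
    (hM : ∀ᵐ x ∂volume.restrict ω, ‖gradient u x‖ ≤ M)
    (hint1 : IntegrableOn (fun x => a x * ‖gradient u x‖ ^ 2) Ω)
    (hint2 : IntegrableOn (fun x => atil x * ‖gradient util x‖ ^ 2) Ω)
    (hint3 : IntegrableOn (fun x => atil x * ⟪gradient util x, gradient u x⟫) Ω)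
    (hint4 : IntegrableOn (fun x => a x * ⟪gradient u x, gradient util x⟫) Ω)
    (hint5 : IntegrableOn (fun x => ‖gradient u x‖ ^ 2) Ω)
    (hint6 : IntegrableOn (fun x => ‖gradient util x‖ ^ 2) Ω)
    (hB1 : (∫ x in Ω, a x * ‖gradient u x‖ ^ 2)
        = ∫ x in Ω, atil x * ⟪gradient util x, gradient u x⟫)
    (hB2 : (∫ x in Ω, a x * ⟪gradient u x, gradient util x⟫)
        = ∫ x in Ω, atil x * ‖gradient util x‖ ^ 2)
    (hKp : |(∫ x in Ω, a x * ‖gradient u x‖ ^ 2) - ∫ x in Ω, atil x * ‖gradient util x‖ ^ 2|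
        ≤ K * h ^ p) :
    |(∫ x in Ω, a x * ‖gradient u x‖ ^ 2) - ∫ x in Ω, atil x * ‖gradient util x‖ ^ 2|
      ≤ Real.sqrt (c₀ * |a₀ - a₁|) * M
          * Real.sqrt (K + (β₁ / β₀) * (K + |a₀ - a₁| * c₀ * M ^ 2))
          * h ^ (1 + p / 2) :=
  stmt_7_general Ω ω hΩmeas hΩfin hωmeas hωsub a₀ a₁ a atil hameas hatilmeas ha_eq ha_diff β₀ β₁ hβ₀
    hβ ha_bdd hatil_bdd u util c₀ h M K p hc₀ hh0 hh1 hM0 hK hp2 hωvol hM hint1 hint2 hint3 hint4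
    hint5 hint6 hB1 hB2 hKp
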